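/- (Corollary 3, conditional form.) Let σ₁ ∈ [−1, 1] and σ₂ ∈ [−1, 0] satisfy the index condition: either (σ₁ − σ₂/2 ≤ 1 and σ₂ > −1) or (σ₁ < 1/2 and σ₂ = −1). Let u₀, B₀ ∈ L²(ℝ³; ℝ³) with ‖B₀‖_{𝒴^{σ₂}} < ∞, and let (u, B) : [0,∞) → L²(ℝ³;ℝ³) × L²(ℝ³;ℝ³) satisfy the Fourier Duhamel identity B̂(t,ξ) = e^{−t|ξ|²} B̂₀(ξ) + ∫₀^t e^{−(t−τ)|ξ|²} ( iξ × F[u×B](τ,ξ) − iξ × ( iξ · F[B⊗B](τ,ξ) ) ) dτ for all t ≥ 0 and a.e. ξ, together with the decay bound ‖u(t)‖²_{L²} + ‖B(t)‖²_{L²} ≤ K (1+t)^{−3/2 + σ₁} for all t > 0 and some K > 0 (with σ₁ ≥ σ₂). Then sup_{t ≥ 0} ‖B(t)‖_{𝒴^{σ₂}} < ∞. -/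

import Mathlib

/-!
Each Fourier mode is estimated through the Duhamel formula. The nonlinear terms are Fourier
transforms of products of `L²` fields, hence bounded uniformly in `ξ` by `|ξ|` resp. `|ξ|²` times
`‖u‖² + ‖B‖² ≤ K (1 + τ)^(σ₁ - 3/2)`. After multiplying by `|ξ|^σ₂`, everything reduces to the
uniform boundedness in `t, r ≥ 0` of `∫₀ᵗ e^(-(t-τ) r²) r^a (1+τ)^c dτ` for `a = σ₂ + 1, σ₂ + 2`
and `c = σ₁ - 3/2`; this is where the index condition enters. For `0 < a < 2` one uses
`e^(-s r²) r^a ≤ s^(-a/2)` and splits the time integral at `t/2`: both halves are bounded exactly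
when `c ≤ a/2 - 1`. The endpoint `a = 0` needs `c < -1`, and `a = 2` integrates exactly.
The Duhamel identity holds only for a.e. `ξ`, but Fourier transforms are continuous, so the bound
holds at every `ξ`.
-/

open MeasureTheory Real
open scoped FourierTransform

noncomputable section

/-- Componentwise Fourier transform of a vector field `g : ℝ³ → ℝ³`,
viewed as a `ℂ³`-valued function of the frequency `ξ`. -/
def ftv (g : EuclideanSpace ℝ (Fin 3) → EuclideanSpace ℝ (Fin 3))
    (ξ : EuclideanSpace ℝ (Fin 3)) : EuclideanSpace ℂ (Fin 3) :=
  (EuclideanSpace.equiv (Fin 3) ℂ).symm fun i => 𝓕 (fun x => ((g x i : ℝ) : ℂ)) ξ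

/-- Cross product on `ℂ³`. -/
def crossC (a b : Fin 3 → ℂ) : Fin 3 → ℂ :=
  ![a 1 * b 2 - a 2 * b 1, a 2 * b 0 - a 0 * b 2, a 0 * b 1 - a 1 * b 0]

/-- Cross product of two vectors of `ℝ³`. -/
def crossR (a b : EuclideanSpace ℝ (Fin 3)) : Fin 3 → ℝ :=
  ![a 1 * b 2 - a 2 * b 1, a 2 * b 0 - a 0 * b 2, a 0 * b 1 - a 1 * b 0]

/-- The vector `iξ` of `ℂ³` associated to a frequency `ξ ∈ ℝ³`. -/
def iXi (ξ : EuclideanSpace ℝ (Fin 3)) : Fin 3 → ℂ :=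
  fun j => Complex.I * (ξ j : ℂ)

/-- The vector `iξ · F[v⊗w](ξ)`, with `k`-th component `∑_j iξ_j 𝓕(v_j w_k)(ξ)`. -/
def divTensor (v w : EuclideanSpace ℝ (Fin 3) → EuclideanSpace ℝ (Fin 3))
    (ξ : EuclideanSpace ℝ (Fin 3)) : Fin 3 → ℂ :=
  fun k => ∑ j, Complex.I * (ξ j : ℂ) *
    𝓕 (fun x => ((v x j : ℝ) : ℂ) * ((w x k : ℝ) : ℂ)) ξ

/-- The Fourier transform `F[v×w](ξ)` of the cross product of two vector fields. -/
def ftCross (v w : EuclideanSpace ℝ (Fin 3) → EuclideanSpace ℝ (Fin 3))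
    (ξ : EuclideanSpace ℝ (Fin 3)) : Fin 3 → ℂ :=
  fun j => 𝓕 (fun x => ((crossR (v x) (w x) j : ℝ) : ℂ)) ξ

local notation "ℝ³" => EuclideanSpace ℝ (Fin 3)

lemma rpow_le_exp {x θ : ℝ} (hx : 0 ≤ x) (hθ₀ : 0 ≤ θ) (hθ₁ : θ ≤ 1) : x ^ θ ≤ Real.exp x := by
  have hle : x ^ θ ≤ x + 1 := by
    rcases le_total x 1 with h | h
    · linarith [Real.rpow_le_one hx h hθ₀]
    · calc x ^ θ ≤ x ^ (1:ℝ) := Real.rpow_le_rpow_of_exponent_le h hθ₁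
        _ ≤ x + 1 := by rw [Real.rpow_one]; linarith
  linarith [Real.add_one_le_exp x]

lemma exp_neg_mul_sq_mul_rpow_le {s r a : ℝ} (hs : 0 < s) (hr : 0 ≤ r) (ha₀ : 0 ≤ a)
    (ha₂ : a ≤ 2) : Real.exp (-(s * r ^ 2)) * r ^ a ≤ s ^ (-(a / 2)) := by
  have key : s ^ (a / 2) * r ^ a ≤ Real.exp (s * r ^ 2) := by
    have h := rpow_le_exp (by positivity : 0 ≤ s * r ^ 2) (by linarith : 0 ≤ a / 2)
      (by linarith : a / 2 ≤ 1)
    have hr2 : (r ^ 2) ^ (a / 2) = r ^ a := by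
      rw [← Real.rpow_two, ← Real.rpow_mul hr, mul_div_cancel₀ a two_ne_zero]
    rwa [Real.mul_rpow hs.le (by positivity), hr2] at h
  rw [Real.rpow_neg hs.le, Real.exp_neg, inv_mul_le_iff₀ (Real.exp_pos _), ← div_eq_mul_inv,
    le_div_iff₀ (by positivity)]
  linarith

def duhamelWeight (a c t r τ : ℝ) : ℝ :=
  Real.exp (-((t - τ) * r ^ 2)) * r ^ a * (1 + τ) ^ c

lemma intervalIntegrable_duhamelWeight {a c t r x y : ℝ} (hx : 0 ≤ x) (hy : 0 ≤ y) :
    IntervalIntegrable (duhamelWeight a c t r) volume x y := by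
  refine ContinuousOn.intervalIntegrable fun τ hτ => ?_
  have hτ : 0 ≤ τ := le_min hx hy |>.trans hτ.1
  unfold duhamelWeight
  exact ((by fun_prop : Continuous fun τ => Real.exp (-((t - τ) * r ^ 2)) * r ^ a).continuousAt.mul
    ((by fun_prop : Continuous fun τ : ℝ => 1 + τ).continuousAt.rpow_const
      (Or.inl (by linarith)))).continuousWithinAt

lemma integral_one_add_rpow_le {c t : ℝ} (hc : c < -1) (ht : 0 ≤ t) :
    ∫ τ in (0:ℝ)..t, (1 + τ) ^ c ≤ -1 / (c + 1) := by
  have h1 : (0:ℝ) ∉ Set.uIcc 1 (1 + t) := by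
    rw [Set.uIcc_of_le (by linarith)]; exact fun h => by linarith [h.1]
  rw [intervalIntegral.integral_comp_add_left (fun x => x ^ c),
    integral_rpow (Or.inr ⟨hc.ne, by simpa using h1⟩), add_zero, Real.one_rpow,
    div_le_div_right_of_neg (by linarith)]
  linarith [Real.rpow_nonneg (by linarith : (0:ℝ) ≤ 1 + t) (c + 1)]

lemma integral_duhamelWeight_zero_le {c t r : ℝ} (hc : c < -1) (ht : 0 ≤ t) :
    ∫ τ in (0:ℝ)..t, duhamelWeight 0 c t r τ ≤ -1 / (c + 1) := by
  refine le_trans (intervalIntegral.integral_mono_on ht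
    (intervalIntegrable_duhamelWeight le_rfl ht) ?_ fun τ hτ => ?_) (integral_one_add_rpow_le hc ht)
  · exact (continuousOn_id.const_add 1 |>.rpow_const fun τ hτ => Or.inl (by
      rw [Set.uIcc_of_le ht] at hτ; simp only [id]; linarith [hτ.1])).intervalIntegrable
  · have hexp : Real.exp (-((t - τ) * r ^ 2)) ≤ 1 :=
      Real.exp_le_one_iff.mpr (by nlinarith [hτ.2, sq_nonneg r])
    rw [duhamelWeight, Real.rpow_zero, mul_one]
    exact mul_le_of_le_one_left (Real.rpow_nonneg (by linarith [hτ.1]) c) hexp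

lemma integral_exp_mul_sq (t r : ℝ) :
    ∫ τ in (0:ℝ)..t, Real.exp (-((t - τ) * r ^ 2)) * r ^ 2 = 1 - Real.exp (-(t * r ^ 2)) := by
  have hderiv : ∀ τ ∈ Set.uIcc 0 t, HasDerivAt (fun y => Real.exp (-((t - y) * r ^ 2)))
      (Real.exp (-((t - τ) * r ^ 2)) * r ^ 2) τ := fun τ _ => by
    simpa using (((hasDerivAt_id τ).const_sub t).mul_const (r ^ 2)).neg.exp
  have hcont : Continuous fun τ => Real.exp (-((t - τ) * r ^ 2)) * r ^ 2 := by fun_prop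
  rw [intervalIntegral.integral_eq_sub_of_hasDerivAt hderiv (hcont.intervalIntegrable 0 t)]
  simp

lemma integral_duhamelWeight_two_le {c t r : ℝ} (hc : c ≤ 0) (ht : 0 ≤ t) :
    ∫ τ in (0:ℝ)..t, duhamelWeight 2 c t r τ ≤ 1 := by
  have hcont : Continuous fun τ => Real.exp (-((t - τ) * r ^ 2)) * r ^ 2 := by fun_prop
  refine le_trans (intervalIntegral.integral_mono_on ht
    (intervalIntegrable_duhamelWeight le_rfl ht) (hcont.intervalIntegrable 0 t) fun τ hτ => ?_) ?_
  · rw [duhamelWeight, Real.rpow_two]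
    exact mul_le_of_le_one_right (by positivity)
      (Real.rpow_le_one_of_one_le_of_nonpos (by linarith [hτ.1]) hc)
  · rw [integral_exp_mul_sq]
    linarith [Real.exp_pos (-(t * r ^ 2))]

lemma integral_rpow_sub_one {p h : ℝ} (hp : 0 < p) :
    ∫ τ in (0:ℝ)..h, τ ^ (p - 1) = h ^ p / p := by
  rw [integral_rpow (Or.inl (by linarith)), sub_add_cancel, Real.zero_rpow hp.ne', sub_zero]

lemma integral_duhamelWeight_zero_half_le {a c t r : ℝ} (ha₀ : 0 < a) (ha₂ : a ≤ 2)
    (hac : c ≤ a / 2 - 1) (ht : 0 < t) (hr : 0 ≤ r) :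
    ∫ τ in (0:ℝ)..t / 2, duhamelWeight a c t r τ ≤ 2 / a := by
  set h := t / 2 with hdef
  have hh : 0 < h := by positivity
  calc ∫ τ in (0:ℝ)..h, duhamelWeight a c t r τ
      ≤ ∫ τ in (0:ℝ)..h, h ^ (-(a / 2)) * τ ^ (a / 2 - 1) := by
        refine intervalIntegral.integral_mono_on_of_le_Ioo hh.le
          (intervalIntegrable_duhamelWeight le_rfl hh.le)
          ((intervalIntegral.intervalIntegrable_rpow' (by linarith)).const_mul _)
          fun τ hτ => mul_le_mul ?_ ?_ (Real.rpow_nonneg (by linarith [hτ.1]) _)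
            (Real.rpow_nonneg hh.le _)
        · calc Real.exp (-((t - τ) * r ^ 2)) * r ^ a
              ≤ Real.exp (-(h * r ^ 2)) * r ^ a := by
                gcongr; linarith [hτ.2]
            _ ≤ h ^ (-(a / 2)) := exp_neg_mul_sq_mul_rpow_le hh hr ha₀.le ha₂
        · calc (1 + τ) ^ c ≤ (1 + τ) ^ (a / 2 - 1) :=
                Real.rpow_le_rpow_of_exponent_le (by linarith [hτ.1]) hac
            _ ≤ τ ^ (a / 2 - 1) := Real.rpow_le_rpow_of_nonpos hτ.1 (by linarith) (by linarith)
    _ = 2 / a := by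
        rw [intervalIntegral.integral_const_mul, integral_rpow_sub_one (by linarith),
          mul_div_assoc', ← Real.rpow_add hh, neg_add_cancel, Real.rpow_zero]
        field_simp

lemma integral_duhamelWeight_half_self_le {a c t r : ℝ} (ha₀ : 0 ≤ a) (ha₂ : a < 2)
    (hac : c ≤ a / 2 - 1) (ht : 0 < t) (hr : 0 ≤ r) :
    ∫ τ in t / 2..t, duhamelWeight a c t r τ ≤ 1 / (1 - a / 2) := by
  set h := t / 2 with hh
  have hh₀ : 0 < h := by positivity
  have hth : t - h = h := by rw [hh]; ring
  have hint : IntervalIntegrable (fun τ => (t - τ) ^ (-(a / 2))) volume h t := by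
    have h' := ((intervalIntegral.intervalIntegrable_rpow' (a := 0) (b := h)
      (by linarith : -1 < -(a / 2))).comp_sub_left t).symm
    rwa [sub_zero, hth] at h'
  calc ∫ τ in h..t, duhamelWeight a c t r τ
      ≤ ∫ τ in h..t, (1 + h) ^ c * (t - τ) ^ (-(a / 2)) := by
        refine intervalIntegral.integral_mono_on_of_le_Ioo (by linarith)
          (intervalIntegrable_duhamelWeight hh₀.le ht.le) (hint.const_mul _) fun τ hτ => ?_
        rw [duhamelWeight, mul_comm ((1 + h) ^ c)]
        exact mul_le_mul (exp_neg_mul_sq_mul_rpow_le (by linarith [hτ.2]) hr ha₀ ha₂.le)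
          (Real.rpow_le_rpow_of_nonpos (by positivity) (by linarith [hτ.1]) (by linarith))
          (Real.rpow_nonneg (by linarith [hτ.1]) _) (Real.rpow_nonneg (by linarith [hτ.2]) _)
    _ = (1 + h) ^ c * h ^ (1 - a / 2) / (1 - a / 2) := by
        rw [intervalIntegral.integral_const_mul, intervalIntegral.integral_comp_sub_left
          (fun x => x ^ (-(a / 2))), sub_self, hth, integral_rpow (Or.inl (by linarith)),
          Real.zero_rpow (by linarith), sub_zero, neg_add_eq_sub, mul_div_assoc]
    _ ≤ (1 + h) ^ c * (1 + h) ^ (1 - a / 2) / (1 - a / 2) := by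
        gcongr <;> linarith
    _ ≤ 1 / (1 - a / 2) := by
        rw [← Real.rpow_add (by positivity)]
        gcongr
        · linarith
        · exact Real.rpow_le_one_of_one_le_of_nonpos (by linarith) (by linarith)

lemma integral_duhamelWeight_le {a c t r : ℝ} (ha₀ : 0 < a) (ha₂ : a < 2)
    (hac : c ≤ a / 2 - 1) (ht : 0 ≤ t) (hr : 0 ≤ r) :
    ∫ τ in (0:ℝ)..t, duhamelWeight a c t r τ ≤ 2 / a + 1 / (1 - a / 2) := by
  rcases ht.eq_or_lt with rfl | ht
  · rw [intervalIntegral.integral_same]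
    have : 0 < 1 - a / 2 := by linarith
    positivity
  rw [← intervalIntegral.integral_add_adjacent_intervals (b := t / 2)
    (intervalIntegrable_duhamelWeight le_rfl (by positivity))
    (intervalIntegrable_duhamelWeight (by positivity) ht.le)]
  exact add_le_add (integral_duhamelWeight_zero_half_le ha₀ ha₂.le hac ht hr)
    (integral_duhamelWeight_half_self_le ha₀.le ha₂ hac ht hr)

lemma exists_integral_duhamelWeight_le {a c : ℝ} (ha₀ : 0 ≤ a) (ha₂ : a ≤ 2)
    (hac : c ≤ a / 2 - 1) (hc : a = 0 → c < -1) :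
    ∃ C, ∀ t r, 0 ≤ t → 0 ≤ r → ∫ τ in (0:ℝ)..t, duhamelWeight a c t r τ ≤ C := by
  rcases ha₀.eq_or_lt with rfl | ha₀
  · exact ⟨_, fun t r ht _ => integral_duhamelWeight_zero_le (hc rfl) ht⟩
  rcases ha₂.eq_or_lt with rfl | ha₂
  · exact ⟨1, fun t r ht _ => integral_duhamelWeight_two_le (by linarith) ht⟩
  · exact ⟨_, fun t r ht hr => integral_duhamelWeight_le ha₀ ha₂ hac ht hr⟩


section Fourier

variable {V : Type*} [NormedAddCommGroup V] [InnerProductSpace ℝ V] [FiniteDimensional ℝ V]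
  [MeasurableSpace V] [BorelSpace V]

lemma continuous_fourier_fun {E : Type*} [NormedAddCommGroup E] [NormedSpace ℂ E] (f : V → E) :
    Continuous (𝓕 f) := by
  by_cases hf : Integrable f
  · exact VectorFourier.fourierIntegral_continuous Real.continuous_fourierChar
      continuous_inner hf
  · have hzero : 𝓕 f = 0 := funext fun w => by
      rw [Real.fourier_eq]
      exact integral_undef ((Real.fourierIntegral_convergent_iff w).not.mpr hf)
    rw [hzero]
    exact continuous_const

lemma norm_fourier_le_of_norm_le_mul_norm {F G : Type*} [NormedAddCommGroup F]
    [NormedAddCommGroup G] {g : V → ℂ} {v : V → F} {w : V → G} (hv : MemLp v 2)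
    (hw : MemLp w 2) {k : ℝ} (hk : 0 ≤ k) (hg : ∀ x, ‖g x‖ ≤ k * (‖v x‖ * ‖w x‖)) (ξ : V) :
    ‖𝓕 g ξ‖ ≤ k * (((∫ x, ‖v x‖ ^ 2) + ∫ x, ‖w x‖ ^ 2) / 2) := by
  have hv2 := hv.norm.integrable_sq
  have hw2 := hw.norm.integrable_sq
  calc ‖𝓕 g ξ‖ ≤ ∫ x, ‖g x‖ := VectorFourier.norm_fourierIntegral_le_integral_norm _ _ _ g ξ
    _ ≤ ∫ x, k * ((‖v x‖ ^ 2 + ‖w x‖ ^ 2) / 2) := by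
        refine integral_mono_of_nonneg (.of_forall fun x => norm_nonneg _)
          (((hv2.add hw2).div_const 2).const_mul k) (.of_forall fun x => (hg x).trans ?_)
        exact mul_le_mul_of_nonneg_left (by linarith [two_mul_le_add_sq ‖v x‖ ‖w x‖]) hk
    _ = k * (((∫ x, ‖v x‖ ^ 2) + ∫ x, ‖w x‖ ^ 2) / 2) := by
        rw [integral_const_mul, integral_div, integral_add hv2 hw2]

end Fourier

lemma continuous_ftv (g : ℝ³ → ℝ³) : Continuous (ftv g) :=
  (EuclideanSpace.equiv (Fin 3) ℂ).symm.continuous.comp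
    (continuous_pi fun _ => continuous_fourier_fun _)

lemma norm_crossC_apply_le {a b : Fin 3 → ℂ} {A B : ℝ} (ha : ∀ j, ‖a j‖ ≤ A)
    (hb : ∀ j, ‖b j‖ ≤ B) (i : Fin 3) : ‖crossC a b i‖ ≤ 2 * (A * B) := by
  have hA : 0 ≤ A := (norm_nonneg _).trans (ha 0)
  have key : ∀ p q p' q', ‖a p * b q - a p' * b q'‖ ≤ 2 * (A * B) := fun p q p' q' => by
    refine (norm_sub_le _ _).trans ?_
    rw [norm_mul, norm_mul]
    linarith [mul_le_mul (ha p) (hb q) (norm_nonneg _) hA,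
      mul_le_mul (ha p') (hb q') (norm_nonneg _) hA]
  fin_cases i <;> exact key _ _ _ _

lemma norm_ofReal_crossR_apply_le (a b : ℝ³) (i : Fin 3) :
    ‖((crossR a b i : ℝ) : ℂ)‖ ≤ 2 * (‖a‖ * ‖b‖) := by
  have hcross : ((crossR a b i : ℝ) : ℂ) = crossC (fun j => (a j : ℂ)) (fun j => (b j : ℂ)) i := by
    fin_cases i <;> simp [crossR, crossC]
  rw [hcross]
  exact norm_crossC_apply_le (fun j => by simpa using PiLp.norm_apply_le a j)
    (fun j => by simpa using PiLp.norm_apply_le b j) i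

lemma norm_iXi_apply_le (ξ : ℝ³) (j : Fin 3) : ‖iXi ξ j‖ ≤ ‖ξ‖ := by
  rw [iXi, norm_mul, Complex.norm_I, one_mul, Complex.norm_real]
  exact PiLp.norm_apply_le ξ j

lemma norm_ftCross_apply_le {v w : ℝ³ → ℝ³} (hv : MemLp v 2) (hw : MemLp w 2) (ξ : ℝ³)
    (j : Fin 3) :
    ‖ftCross v w ξ j‖ ≤ (∫ x, ‖v x‖ ^ 2) + ∫ x, ‖w x‖ ^ 2 := by
  have := norm_fourier_le_of_norm_le_mul_norm hv hw zero_le_two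
    (fun x => norm_ofReal_crossR_apply_le (v x) (w x) j) ξ
  rw [ftCross]
  linarith

lemma norm_divTensor_apply_le {v w : ℝ³ → ℝ³} (hv : MemLp v 2) (hw : MemLp w 2) (ξ : ℝ³)
    (k : Fin 3) :
    ‖divTensor v w ξ k‖ ≤ 3 * (‖ξ‖ * (((∫ x, ‖v x‖ ^ 2) + ∫ x, ‖w x‖ ^ 2) / 2)) := by
  have hterm : ∀ j, ‖iXi ξ j * 𝓕 (fun x => ((v x j : ℝ) : ℂ) * ((w x k : ℝ) : ℂ)) ξ‖
      ≤ ‖ξ‖ * (((∫ x, ‖v x‖ ^ 2) + ∫ x, ‖w x‖ ^ 2) / 2) := fun j => by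
    rw [norm_mul]
    refine mul_le_mul (norm_iXi_apply_le ξ j) ?_ (norm_nonneg _) (norm_nonneg _)
    simpa using norm_fourier_le_of_norm_le_mul_norm hv hw zero_le_one (fun x => by
      rw [norm_mul, Complex.norm_real, Complex.norm_real, one_mul]
      exact mul_le_mul (PiLp.norm_apply_le _ j) (PiLp.norm_apply_le _ k) (norm_nonneg _)
        (norm_nonneg _)) ξ
  calc ‖divTensor v w ξ k‖
        ≤ ∑ j, ‖iXi ξ j * 𝓕 (fun x => ((v x j : ℝ) : ℂ) * ((w x k : ℝ) : ℂ)) ξ‖ :=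
        norm_sum_le _ _
    _ ≤ ∑ _j : Fin 3, ‖ξ‖ * (((∫ x, ‖v x‖ ^ 2) + ∫ x, ‖w x‖ ^ 2) / 2) :=
        Finset.sum_le_sum fun j _ => hterm j
    _ = 3 * (‖ξ‖ * (((∫ x, ‖v x‖ ^ 2) + ∫ x, ‖w x‖ ^ 2) / 2)) := by simp

lemma norm_duhamelForcing_le {v w : ℝ³ → ℝ³} (hv : MemLp v 2) (hw : MemLp w 2) (ξ : ℝ³)
    (i : Fin 3) :
    ‖crossC (iXi ξ) (ftCross v w ξ) i - crossC (iXi ξ) (divTensor w w ξ) i‖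
      ≤ (2 * ‖ξ‖ + 6 * ‖ξ‖ ^ 2) * ((∫ x, ‖v x‖ ^ 2) + ∫ x, ‖w x‖ ^ 2) := by
  have hv2 : 0 ≤ ∫ x, ‖v x‖ ^ 2 := integral_nonneg fun x => sq_nonneg _
  have hconv := norm_crossC_apply_le (norm_iXi_apply_le ξ) (norm_ftCross_apply_le hv hw ξ) i
  have hhall := norm_crossC_apply_le (norm_iXi_apply_le ξ) (norm_divTensor_apply_le hw hw ξ) i
  refine (norm_sub_le _ _).trans ?_
  nlinarith [norm_nonneg ξ]

lemma norm_exp_neg_ofReal_mul_le {s : ℝ} (hs : 0 ≤ s) (z : ℂ) :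
    ‖Complex.exp (-(s : ℂ)) * z‖ ≤ ‖z‖ := by
  rw [norm_mul, ← Complex.ofReal_neg, Complex.norm_exp_ofReal]
  exact mul_le_of_le_one_left (norm_nonneg z) (Real.exp_le_one_iff.mpr (by linarith))

lemma rpow_mul_norm_duhamelIntegrand_le {v w : ℝ³ → ℝ³} (hv : MemLp v 2) (hw : MemLp w 2)
    {σ c K t τ : ℝ} (hE : (∫ x, ‖v x‖ ^ 2) + (∫ x, ‖w x‖ ^ 2) ≤ K * (1 + τ) ^ c)
    (ξ : ℝ³) (i : Fin 3) :
    ‖ξ‖ ^ σ * ‖Complex.exp (-(((t - τ) * ‖ξ‖ ^ 2 : ℝ) : ℂ))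
        * (crossC (iXi ξ) (ftCross v w ξ) i - crossC (iXi ξ) (divTensor w w ξ) i)‖
      ≤ K * (2 * duhamelWeight (σ + 1) c t ‖ξ‖ τ + 6 * duhamelWeight (σ + 2) c t ‖ξ‖ τ) := by
  set r := ‖ξ‖
  set e := Real.exp (-((t - τ) * r ^ 2))
  have hr : 0 ≤ r := norm_nonneg ξ
  have hweight : 0 ≤ e * (K * (1 + τ) ^ c) :=
    mul_nonneg (Real.exp_nonneg _) ((add_nonneg (integral_nonneg fun _ => sq_nonneg _)
      (integral_nonneg fun _ => sq_nonneg _)).trans hE)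
  have hr₁ : r ^ σ * r ≤ r ^ (σ + 1) := by simpa using Real.le_rpow_add hr σ 1
  have hr₂ : r ^ σ * r ^ 2 ≤ r ^ (σ + 2) := by simpa using Real.le_rpow_add hr σ 2
  rw [norm_mul, ← Complex.ofReal_neg, Complex.norm_exp_ofReal]
  calc r ^ σ * (e * ‖crossC (iXi ξ) (ftCross v w ξ) i - crossC (iXi ξ) (divTensor w w ξ) i‖)
      ≤ r ^ σ * (e * ((2 * r + 6 * r ^ 2) * (K * (1 + τ) ^ c))) := by
        gcongr
        exact (norm_duhamelForcing_le hv hw ξ i).trans (by gcongr)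
    _ = (2 * (r ^ σ * r) + 6 * (r ^ σ * r ^ 2)) * (e * (K * (1 + τ) ^ c)) := by ring
    _ ≤ (2 * r ^ (σ + 1) + 6 * r ^ (σ + 2)) * (e * (K * (1 + τ) ^ c)) := by gcongr
    _ = K * (2 * duhamelWeight (σ + 1) c t r τ + 6 * duhamelWeight (σ + 2) c t r τ) := by
        simp only [duhamelWeight, e]
        ring

lemma rpow_mul_norm_integral_duhamel_le {u B : ℝ → ℝ³ → ℝ³} {σ c K C₁ C₂ t : ℝ} (ht : 0 ≤ t)
    (hK : 0 ≤ K) (hu : ∀ τ, 0 ≤ τ → MemLp (u τ) 2) (hB : ∀ τ, 0 ≤ τ → MemLp (B τ) 2)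
    (hdecay : ∀ τ, 0 < τ →
      (∫ x, ‖u τ x‖ ^ 2) + (∫ x, ‖B τ x‖ ^ 2) ≤ K * (1 + τ) ^ c)
    (ξ : ℝ³) (hC₁ : ∫ τ in (0:ℝ)..t, duhamelWeight (σ + 1) c t ‖ξ‖ τ ≤ C₁)
    (hC₂ : ∫ τ in (0:ℝ)..t, duhamelWeight (σ + 2) c t ‖ξ‖ τ ≤ C₂) (i : Fin 3) :
    ‖ξ‖ ^ σ * ‖∫ τ in (0:ℝ)..t, Complex.exp (-(((t - τ) * ‖ξ‖ ^ 2 : ℝ) : ℂ))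
        * (crossC (iXi ξ) (ftCross (u τ) (B τ) ξ) i
          - crossC (iXi ξ) (divTensor (B τ) (B τ) ξ) i)‖ ≤ K * (2 * C₁ + 6 * C₂) := by
  have hw₁ := intervalIntegrable_duhamelWeight (a := σ + 1) (c := c) (t := t) (r := ‖ξ‖) le_rfl ht
  have hw₂ := intervalIntegrable_duhamelWeight (a := σ + 2) (c := c) (t := t) (r := ‖ξ‖) le_rfl ht
  have hrσ : ‖((‖ξ‖ ^ σ : ℝ) : ℂ)‖ = ‖ξ‖ ^ σ := by
    rw [Complex.norm_real, Real.norm_of_nonneg (by positivity)]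
  rw [← hrσ, ← norm_mul, ← intervalIntegral.integral_const_mul]
  calc _ ≤ ∫ τ in (0:ℝ)..t,
        K * (2 * duhamelWeight (σ + 1) c t ‖ξ‖ τ + 6 * duhamelWeight (σ + 2) c t ‖ξ‖ τ) := by
        refine intervalIntegral.norm_integral_le_of_norm_le ht (.of_forall fun τ hτ => ?_)
          (((hw₁.const_mul 2).add (hw₂.const_mul 6)).const_mul K)
        rw [norm_mul, hrσ]
        exact rpow_mul_norm_duhamelIntegrand_le (hu τ hτ.1.le) (hB τ hτ.1.le) (hdecay τ hτ.1) ξ i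
    _ = K * (2 * (∫ τ in (0:ℝ)..t, duhamelWeight (σ + 1) c t ‖ξ‖ τ)
          + 6 * ∫ τ in (0:ℝ)..t, duhamelWeight (σ + 2) c t ‖ξ‖ τ) := by
        rw [intervalIntegral.integral_const_mul, intervalIntegral.integral_add
          (hw₁.const_mul 2) (hw₂.const_mul 6), intervalIntegral.integral_const_mul,
          intervalIntegral.integral_const_mul]
    _ ≤ K * (2 * C₁ + 6 * C₂) := by gcongr

lemma mul_norm_le_sqrt_mul {𝕜 : Type*} [RCLike 𝕜] {n : ℕ} [NeZero n]
    {x : EuclideanSpace 𝕜 (Fin n)} {s m : ℝ} (hs : 0 ≤ s) (h : ∀ i, s * ‖x i‖ ≤ m) :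
    s * ‖x‖ ≤ √n * m := by
  have hm : 0 ≤ m := (by positivity : 0 ≤ s * ‖x 0‖).trans (h 0)
  refine (pow_le_pow_iff_left₀ (by positivity) (by positivity) two_ne_zero).mp ?_
  calc (s * ‖x‖) ^ 2 = ∑ i, (s * ‖x i‖) ^ 2 := by
        rw [mul_pow, EuclideanSpace.norm_sq_eq, Finset.mul_sum]
        simp only [mul_pow]
    _ ≤ ∑ _i : Fin n, m ^ 2 := Finset.sum_le_sum fun i _ =>
        pow_le_pow_left₀ (by positivity) (h i) 2
    _ = (√n * m) ^ 2 := by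
        rw [Finset.sum_const, Finset.card_univ, Fintype.card_fin, nsmul_eq_mul, mul_pow,
          Real.sq_sqrt (Nat.cast_nonneg _)]

lemma rpow_norm_mul_norm_le_of_ae {V F : Type*} [NormedAddCommGroup V] [MeasurableSpace V]
    {μ : Measure V} [μ.IsOpenPosMeasure] [NormedAddCommGroup F] {G : V → F} (hG : Continuous G)
    {σ C : ℝ} (h : ∀ᵐ ξ ∂μ, ‖ξ‖ ^ σ * ‖G ξ‖ ≤ C) (ξ : V) : ‖ξ‖ ^ σ * ‖G ξ‖ ≤ C := by
  have hdense := μ.dense_of_ae h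
  -- `0 ^ σ = 0` for `σ ≠ 0`, so at the origin only `0 ≤ C` is needed.
  by_cases hξ : ξ = 0 ∧ σ ≠ 0
  · obtain ⟨η, hη⟩ := hdense.nonempty
    rw [hξ.1, norm_zero, Real.zero_rpow hξ.2, zero_mul]
    exact (by positivity : 0 ≤ ‖η‖ ^ σ * ‖G η‖).trans hη
  · have hrpow : ‖ξ‖ ≠ 0 ∨ 0 ≤ σ := by
      rcases not_and_or.mp hξ with hξ | hσ
      · exact Or.inl (norm_ne_zero_iff.mpr hξ)
      · exact Or.inr (not_not.mp hσ).ge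
    have hcont : ContinuousAt (fun η => ‖η‖ ^ σ * ‖G η‖) ξ :=
      ((Real.continuousAt_rpow_const _ _ hrpow).comp continuous_norm.continuousAt).mul
        hG.norm.continuousAt
    exact ContinuousWithinAt.closure_le (hdense.closure_eq ▸ Set.mem_univ ξ)
      hcont.continuousWithinAt continuousWithinAt_const fun η hη => hη

theorem HallMHD_B_pseudomeasure_bound_general (σ₁ σ₂ : ℝ)
    (hσ₂ : -1 ≤ σ₂ ∧ σ₂ ≤ 0)
    (hindex : (σ₁ - σ₂ / 2 ≤ 1 ∧ -1 < σ₂) ∨ (σ₁ < 1 / 2 ∧ σ₂ = -1))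
    (B₀ : EuclideanSpace ℝ (Fin 3) → EuclideanSpace ℝ (Fin 3))
    (u B : ℝ → EuclideanSpace ℝ (Fin 3) → EuclideanSpace ℝ (Fin 3))
    (M : ℝ) (hM : ∀ ξ : EuclideanSpace ℝ (Fin 3), ‖ξ‖ ^ σ₂ * ‖ftv B₀ ξ‖ ≤ M)
    (hL2u : ∀ t, 0 ≤ t → MemLp (u t) 2 volume)
    (hL2B : ∀ t, 0 ≤ t → MemLp (B t) 2 volume)
    (hduhamelB : ∀ t : ℝ, 0 ≤ t → ∀ᵐ ξ : EuclideanSpace ℝ (Fin 3), ∀ i : Fin 3,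
      ftv (B t) ξ i
        = Complex.exp (-((t * ‖ξ‖ ^ 2 : ℝ) : ℂ)) * ftv B₀ ξ i
          + ∫ τ in (0:ℝ)..t, Complex.exp (-(((t - τ) * ‖ξ‖ ^ 2 : ℝ) : ℂ))
              * (crossC (iXi ξ) (ftCross (u τ) (B τ) ξ) i
                  - crossC (iXi ξ) (divTensor (B τ) (B τ) ξ) i))
    (K : ℝ) (hK : 0 < K)
    (hdecay : ∀ t, 0 < t →
      (∫ x : EuclideanSpace ℝ (Fin 3), ‖u t x‖ ^ 2)
          + (∫ x : EuclideanSpace ℝ (Fin 3), ‖B t x‖ ^ 2)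
        ≤ K * (1 + t) ^ (-(3 / 2) + σ₁)) :
    ∃ C : ℝ, ∀ t, 0 ≤ t → ∀ ξ : EuclideanSpace ℝ (Fin 3),
      ‖ξ‖ ^ σ₂ * ‖ftv (B t) ξ‖ ≤ C := by
  obtain ⟨C₁, hC₁⟩ := exists_integral_duhamelWeight_le (a := σ₂ + 1) (c := -(3 / 2) + σ₁)
    (by linarith) (by linarith) (by rcases hindex with h | h <;> linarith)
    (fun _ => by rcases hindex with h | h <;> linarith)
  obtain ⟨C₂, hC₂⟩ := exists_integral_duhamelWeight_le (a := σ₂ + 2) (c := -(3 / 2) + σ₁)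
    (by linarith) (by linarith) (by rcases hindex with h | h <;> linarith)
    (fun _ => by linarith)
  refine ⟨√3 * (M + K * (2 * C₁ + 6 * C₂)), fun t ht =>
    rpow_norm_mul_norm_le_of_ae (μ := volume) (continuous_ftv (B t)) ?_⟩
  filter_upwards [hduhamelB t ht] with ξ hξ
  have hcomp : ∀ i, ‖ξ‖ ^ σ₂ * ‖ftv (B t) ξ i‖ ≤ M + K * (2 * C₁ + 6 * C₂) := fun i => by
    have hlinear := (norm_exp_neg_ofReal_mul_le (s := t * ‖ξ‖ ^ 2) (by positivity)
      (ftv B₀ ξ i)).trans (PiLp.norm_apply_le _ i)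
    have hnonlinear := rpow_mul_norm_integral_duhamel_le ht hK.le hL2u hL2B hdecay ξ
      (hC₁ t ‖ξ‖ ht (norm_nonneg ξ)) (hC₂ t ‖ξ‖ ht (norm_nonneg ξ)) i
    rw [hξ i]
    refine (mul_le_mul_of_nonneg_left (norm_add_le _ _) (by positivity)).trans ?_
    rw [mul_add]
    exact add_le_add ((mul_le_mul_of_nonneg_left hlinear (by positivity)).trans (hM ξ)) hnonlinear
  simpa using mul_norm_le_sqrt_mul (n := 3) (by positivity) hcomp

/-- Corollary 3, conditional form. Let `σ₁ ∈ [-1,1]` and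
`σ₂ ∈ [-1,0]` satisfy the index condition: either `σ₁ - σ₂/2 ≤ 1` and `σ₂ > -1`,
or `σ₁ < 1/2` and `σ₂ = -1`; assume also `σ₂ ≤ σ₁`. Let `u₀, B₀ ∈ L²(ℝ³;ℝ³)` with
`‖B₀‖_{𝒴^{σ₂}} < ∞`, and let `(u,B) : [0,∞) → L² × L²` satisfy the Fourier-side
Duhamel identity for `B` together with the decay bound
`‖u(t)‖²_{L²} + ‖B(t)‖²_{L²} ≤ K (1+t)^{-3/2+σ₁}` for all `t > 0`. Then
`sup_{t ≥ 0} ‖B(t)‖_{𝒴^{σ₂}} < ∞`. -/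
theorem HallMHD_B_pseudomeasure_bound (σ₁ σ₂ : ℝ)
    (hσ₁ : -1 ≤ σ₁ ∧ σ₁ ≤ 1) (hσ₂ : -1 ≤ σ₂ ∧ σ₂ ≤ 0) (hσ₂₁ : σ₂ ≤ σ₁)
    (hindex : (σ₁ - σ₂ / 2 ≤ 1 ∧ -1 < σ₂) ∨ (σ₁ < 1 / 2 ∧ σ₂ = -1))
    (u₀ B₀ : EuclideanSpace ℝ (Fin 3) → EuclideanSpace ℝ (Fin 3))
    (u B : ℝ → EuclideanSpace ℝ (Fin 3) → EuclideanSpace ℝ (Fin 3))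
    (hL2u₀ : MemLp u₀ 2 volume) (hL2B₀ : MemLp B₀ 2 volume)
    (M : ℝ) (hM : ∀ ξ : EuclideanSpace ℝ (Fin 3), ‖ξ‖ ^ σ₂ * ‖ftv B₀ ξ‖ ≤ M)
    (hL2u : ∀ t, 0 ≤ t → MemLp (u t) 2 volume)
    (hL2B : ∀ t, 0 ≤ t → MemLp (B t) 2 volume)
    (hduhamelB : ∀ t : ℝ, 0 ≤ t → ∀ᵐ ξ : EuclideanSpace ℝ (Fin 3), ∀ i : Fin 3,
      ftv (B t) ξ i
        = Complex.exp (-((t * ‖ξ‖ ^ 2 : ℝ) : ℂ)) * ftv B₀ ξ i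
          + ∫ τ in (0:ℝ)..t, Complex.exp (-(((t - τ) * ‖ξ‖ ^ 2 : ℝ) : ℂ))
              * (crossC (iXi ξ) (ftCross (u τ) (B τ) ξ) i
                  - crossC (iXi ξ) (divTensor (B τ) (B τ) ξ) i))
    (K : ℝ) (hK : 0 < K)
    (hdecay : ∀ t, 0 < t →
      (∫ x : EuclideanSpace ℝ (Fin 3), ‖u t x‖ ^ 2)
          + (∫ x : EuclideanSpace ℝ (Fin 3), ‖B t x‖ ^ 2)
        ≤ K * (1 + t) ^ (-(3 / 2) + σ₁)) :
    ∃ C : ℝ, ∀ t, 0 ≤ t → ∀ ξ : EuclideanSpace ℝ (Fin 3),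
      ‖ξ‖ ^ σ₂ * ‖ftv (B t) ξ‖ ≤ C :=
  HallMHD_B_pseudomeasure_bound_general σ₁ σ₂ hσ₂ hindex B₀ u B M hM hL2u hL2B hduhamelB K hK hdecay
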